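/- arXiv:1508.07589 — 4 statements merged into one kernel-verified Lean document; each statement's English description precedes it below -/
import Mathlib

section
/- Let A₁₁, A₁₂, A₂₂, s, s′ be real numbers with A₁₁ < 0, A₂₂ < 0, A₁₁A₂₂ − A₁₂² > 0, A₁₂ ≠ 0, and s·s′ ≠ 0. Then the quadratic equation x² − (A₁₁ s + A₂₂ s′) x + (A₁₁A₂₂ − A₁₂²) s s′ = 0 has two distinct real negative roots if and only if s > 0 and s′ > 0. -/
/-- The characteristic quadratic `x² − (A₁₁s + A₂₂s′)x + (A₁₁A₂₂ − A₁₂²)ss′ = 0`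
(with `A₁₁ < 0`, `A₂₂ < 0`, `A₁₁A₂₂ − A₁₂² > 0`, `A₁₂ ≠ 0`, `ss′ ≠ 0`) has two
distinct real negative roots if and only if `s > 0` and `s′ > 0`. -/
theorem quadratic_two_distinct_negative_roots_iff
    (A₁₁ A₁₂ A₂₂ s s' : ℝ)
    (h₁ : A₁₁ < 0) (h₂ : A₂₂ < 0) (h₃ : A₁₁ * A₂₂ - A₁₂ ^ 2 > 0)
    (h₄ : A₁₂ ≠ 0) (h₅ : s * s' ≠ 0) :
    (∃ x y : ℝ, x ≠ y ∧ x < 0 ∧ y < 0 ∧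
      x ^ 2 - (A₁₁ * s + A₂₂ * s') * x + (A₁₁ * A₂₂ - A₁₂ ^ 2) * (s * s') = 0 ∧
      y ^ 2 - (A₁₁ * s + A₂₂ * s') * y + (A₁₁ * A₂₂ - A₁₂ ^ 2) * (s * s') = 0) ↔
    (0 < s ∧ 0 < s') := by
  constructor
  · rintro ⟨x, y, hxy, hx, hy, hex, hey⟩
    -- Vieta: x + y = b, x*y = c
    have hsum : x + y = A₁₁ * s + A₂₂ * s' := by
      have hne : x - y ≠ 0 := sub_ne_zero.mpr hxy
      have : (x - y) * (x + y - (A₁₁ * s + A₂₂ * s')) = 0 := by nlinarith [hex, hey]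
      rcases mul_eq_zero.mp this with h | h
      · exact absurd h hne
      · linarith
    have hprod : x * y = (A₁₁ * A₂₂ - A₁₂ ^ 2) * (s * s') := by nlinarith [hex, hsum]
    have hss' : 0 < s * s' := by
      have hxy0 : 0 < x * y := mul_pos_of_neg_of_neg hx hy
      nlinarith [hprod]
    have hb : A₁₁ * s + A₂₂ * s' < 0 := by
      rw [← hsum]; linarith
    rcases lt_or_gt_of_ne (fun h : s = 0 => by simp [h] at h₅) with hs | hs
    · exfalso
      have hs' : s' < 0 := by
        rcases lt_trichotomy s' 0 with h | h | h
        · exact h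
        · exfalso; rw [h] at hss'; simp at hss'
        · nlinarith
      nlinarith
    · refine ⟨hs, ?_⟩
      rcases lt_trichotomy s' 0 with h | h | h
      · nlinarith
      · exfalso; rw [h] at hss'; simp at hss'
      · exact h
  · rintro ⟨hs, hs'⟩
    set b := A₁₁ * s + A₂₂ * s' with hbdef
    set c := (A₁₁ * A₂₂ - A₁₂ ^ 2) * (s * s') with hcdef
    have hss' : 0 < s * s' := mul_pos hs hs'
    have hc : 0 < c := mul_pos h₃ hss'
    have hb : b < 0 := by
      have := mul_neg_of_neg_of_pos h₁ hs
      have := mul_neg_of_neg_of_pos h₂ hs'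
      simp only [hbdef]; linarith
    have hA12' : 0 < A₁₂ ^ 2 := by positivity
    have hD : 0 < b ^ 2 - 4 * c := by
      have key : b ^ 2 - 4 * c = (A₁₁ * s - A₂₂ * s') ^ 2 + 4 * A₁₂ ^ 2 * (s * s') := by
        simp only [hbdef, hcdef]; ring
      rw [key]
      have : 0 < 4 * A₁₂ ^ 2 * (s * s') := by positivity
      nlinarith [sq_nonneg (A₁₁ * s - A₂₂ * s')]
    set D := b ^ 2 - 4 * c with hDdef
    have hsqD : Real.sqrt D ^ 2 = D := Real.sq_sqrt hD.le
    have hsqDpos : 0 < Real.sqrt D := Real.sqrt_pos.mpr hD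
    have hylt : Real.sqrt D < -b := by
      have h1 : Real.sqrt D ^ 2 < (-b) ^ 2 := by rw [hsqD]; simp only [hDdef]; nlinarith
      nlinarith [hsqDpos, hb]
    refine ⟨(b - Real.sqrt D) / 2, (b + Real.sqrt D) / 2, ?_, ?_, ?_, ?_, ?_⟩
    · intro h
      have h2 : b - Real.sqrt D = b + Real.sqrt D := by
        field_simp at h; linarith
      linarith
    · linarith
    · linarith
    · field_simp
      nlinarith [hsqD]
    · field_simp
      nlinarith [hsqD]
end

section
/- Let Ā, B̄, m₀, m₁, m₂, m₃ and e₁, e₂, e₃ be positive real numbers, and for angles (δ₁, δ₂, η₁, η₂) define ν₁ := −(2·2^{1/3} Ā cos(δ₁ + 2η₁) e₂ m₂ + 2B̄ cos(δ₁ + η₁) e₁ m₁ − 2^{1/3} Ā cos(δ₂ + 2η₂) e₁ m₃)/(√m₀ · e₁ e₂) and ν₂ := (2B̄ cos(δ₁ + η₁) e₃ m₁ − 2·2^{1/3} Ā cos(δ₂ + 2η₂) e₃ m₃ − 2B̄ cos(δ₂ + η₂) e₂ m₂)/(√m₀ · e₂ e₃). Then at the configuration (δ₁, δ₂, η₁,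 η₂) = (0, 0, π, π), and likewise at (δ₁, δ₂, η₁, η₂) = (π, π, π, π), one has ν₁ = 0 and ν₂ = 0 if and only if e₁ = 2·2^{1/3} Ā m₂ e₂ / (2B̄ m₁ + 2^{1/3} Ā m₃) and e₃ = 2B̄ m₂ e₂ / (2B̄ m₁ + 2·2^{1/3} Ā m₃). In particular, for every e₂ > 0 there is a unique pair (e₁, e₃), both positive, solving ν₁ = ν₂ = 0, yielding a one-parameter family of solutions parametrized by e₂. -/
open Real

/-- The relative frequency `ν₁` of the pericentre difference `η₁ = g₁ − g₂` in
the first-order approximating system of the 4:2:1-resonant problem. -/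
noncomputable def nu1 (A B m₀ m₁ m₂ m₃ e₁ e₂ e₃ δ₁ δ₂ η₁ η₂ : ℝ) : ℝ :=
  -(2 * 2 ^ ((1 : ℝ) / 3) * A * Real.cos (δ₁ + 2 * η₁) * e₂ * m₂ +
      2 * B * Real.cos (δ₁ + η₁) * e₁ * m₁ -
      2 ^ ((1 : ℝ) / 3) * A * Real.cos (δ₂ + 2 * η₂) * e₁ * m₃) /
    (Real.sqrt m₀ * (e₁ * e₂))

/-- The relative frequency `ν₂` of the pericentre difference `η₂ = g₂ − g₃`. -/
noncomputable def nu2 (A B m₀ m₁ m₂ m₃ e₁ e₂ e₃ δ₁ δ₂ η₁ η₂ : ℝ) : ℝ :=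
  (2 * B * Real.cos (δ₁ + η₁) * e₃ * m₁ -
      2 * 2 ^ ((1 : ℝ) / 3) * A * Real.cos (δ₂ + 2 * η₂) * e₃ * m₃ -
      2 * B * Real.cos (δ₂ + η₂) * e₂ * m₂) /
    (Real.sqrt m₀ * (e₂ * e₃))

/-- At the configurations `(0, 0, π, π)` (the family `D₋,₋,₊,₊`) and
`(π, π, π, π)` (the family `D₊,₊,₊,₊`), the relative frequencies `ν₁, ν₂`
vanish iff `e₁` and `e₃` are given by explicit positive multiples of `e₂`;
in particular, for every `e₂ > 0` there is a unique pair `(e₁, e₃)` of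
positive eccentricities solving `ν₁ = ν₂ = 0`. -/
theorem nu_vanish_iff (A B m₀ m₁ m₂ m₃ : ℝ)
    (hA : 0 < A) (hB : 0 < B) (hm₀ : 0 < m₀)
    (hm₁ : 0 < m₁) (hm₂ : 0 < m₂) (hm₃ : 0 < m₃) :
    (∀ e₁ e₂ e₃ : ℝ, 0 < e₁ → 0 < e₂ → 0 < e₃ →
      ((nu1 A B m₀ m₁ m₂ m₃ e₁ e₂ e₃ 0 0 π π = 0 ∧
          nu2 A B m₀ m₁ m₂ m₃ e₁ e₂ e₃ 0 0 π π = 0) ↔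
        (e₁ = 2 * 2 ^ ((1 : ℝ) / 3) * A * m₂ * e₂ /
            (2 * B * m₁ + 2 ^ ((1 : ℝ) / 3) * A * m₃) ∧
         e₃ = 2 * B * m₂ * e₂ /
            (2 * B * m₁ + 2 * 2 ^ ((1 : ℝ) / 3) * A * m₃))) ∧
      ((nu1 A B m₀ m₁ m₂ m₃ e₁ e₂ e₃ π π π π = 0 ∧
          nu2 A B m₀ m₁ m₂ m₃ e₁ e₂ e₃ π π π π = 0) ↔
        (e₁ = 2 * 2 ^ ((1 : ℝ) / 3) * A * m₂ * e₂ /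
            (2 * B * m₁ + 2 ^ ((1 : ℝ) / 3) * A * m₃) ∧
         e₃ = 2 * B * m₂ * e₂ /
            (2 * B * m₁ + 2 * 2 ^ ((1 : ℝ) / 3) * A * m₃)))) ∧
    (∀ e₂ : ℝ, 0 < e₂ → ∃! p : ℝ × ℝ, 0 < p.1 ∧ 0 < p.2 ∧
      nu1 A B m₀ m₁ m₂ m₃ p.1 e₂ p.2 0 0 π π = 0 ∧
      nu2 A B m₀ m₁ m₂ m₃ p.1 e₂ p.2 0 0 π π = 0) := by
  have hc : (0:ℝ) < 2 ^ ((1:ℝ)/3) := by positivity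
  have hs : 0 < Real.sqrt m₀ := Real.sqrt_pos.mpr hm₀
  have hD1 : (0:ℝ) < 2 * B * m₁ + 2 ^ ((1:ℝ)/3) * A * m₃ := by positivity
  have hD2 : (0:ℝ) < 2 * B * m₁ + 2 * 2 ^ ((1:ℝ)/3) * A * m₃ := by positivity
  have c1 : Real.cos (0 + 2*π) = 1 := by norm_num [Real.cos_two_pi]
  have c2 : Real.cos (0 + π) = -1 := by norm_num [Real.cos_pi]
  have c3 : Real.cos (π + 2*π) = -1 := by rw [Real.cos_add_two_pi, Real.cos_pi]
  have c4 : Real.cos (π + π) = 1 := by rw [← two_mul, Real.cos_two_pi]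
  -- core equivalences
  have key1 : ∀ e₁ e₂ e₃ : ℝ, 0 < e₁ → 0 < e₂ → 0 < e₃ →
      (nu1 A B m₀ m₁ m₂ m₃ e₁ e₂ e₃ 0 0 π π = 0 ↔
        e₁ = 2 * 2 ^ ((1:ℝ)/3) * A * m₂ * e₂ / (2 * B * m₁ + 2 ^ ((1:ℝ)/3) * A * m₃)) := by
    intro e₁ e₂ e₃ h1 h2 h3
    have hden : Real.sqrt m₀ * (e₁ * e₂) ≠ 0 := by positivity
    rw [nu1, div_eq_zero_iff, or_iff_left hden, c1, c2,
      eq_div_iff hD1.ne']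
    constructor <;> intro h <;> first | linear_combination h | linear_combination -h
  have key2 : ∀ e₁ e₂ e₃ : ℝ, 0 < e₁ → 0 < e₂ → 0 < e₃ →
      (nu2 A B m₀ m₁ m₂ m₃ e₁ e₂ e₃ 0 0 π π = 0 ↔
        e₃ = 2 * B * m₂ * e₂ / (2 * B * m₁ + 2 * 2 ^ ((1:ℝ)/3) * A * m₃)) := by
    intro e₁ e₂ e₃ h1 h2 h3
    have hden : Real.sqrt m₀ * (e₂ * e₃) ≠ 0 := by positivity
    rw [nu2, div_eq_zero_iff, or_iff_left hden, c1, c2,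
      eq_div_iff hD2.ne']
    constructor <;> intro h <;> first | linear_combination h | linear_combination -h
  have key1' : ∀ e₁ e₂ e₃ : ℝ, 0 < e₁ → 0 < e₂ → 0 < e₃ →
      (nu1 A B m₀ m₁ m₂ m₃ e₁ e₂ e₃ π π π π = 0 ↔
        e₁ = 2 * 2 ^ ((1:ℝ)/3) * A * m₂ * e₂ / (2 * B * m₁ + 2 ^ ((1:ℝ)/3) * A * m₃)) := by
    intro e₁ e₂ e₃ h1 h2 h3
    have hden : Real.sqrt m₀ * (e₁ * e₂) ≠ 0 := by positivity
    rw [nu1, div_eq_zero_iff, or_iff_left hden, c3, c4,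
      eq_div_iff hD1.ne']
    constructor <;> intro h <;> first | linear_combination h | linear_combination -h
  have key2' : ∀ e₁ e₂ e₃ : ℝ, 0 < e₁ → 0 < e₂ → 0 < e₃ →
      (nu2 A B m₀ m₁ m₂ m₃ e₁ e₂ e₃ π π π π = 0 ↔
        e₃ = 2 * B * m₂ * e₂ / (2 * B * m₁ + 2 * 2 ^ ((1:ℝ)/3) * A * m₃)) := by
    intro e₁ e₂ e₃ h1 h2 h3
    have hden : Real.sqrt m₀ * (e₂ * e₃) ≠ 0 := by positivity
    rw [nu2, div_eq_zero_iff, or_iff_left hden, c3, c4,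
      eq_div_iff hD2.ne']
    constructor <;> intro h <;> first | linear_combination h | linear_combination -h
  constructor
  · intro e₁ e₂ e₃ h1 h2 h3
    exact ⟨and_congr (key1 e₁ e₂ e₃ h1 h2 h3) (key2 e₁ e₂ e₃ h1 h2 h3),
      and_congr (key1' e₁ e₂ e₃ h1 h2 h3) (key2' e₁ e₂ e₃ h1 h2 h3)⟩
  · intro e₂ h2
    refine ⟨(2 * 2 ^ ((1:ℝ)/3) * A * m₂ * e₂ / (2 * B * m₁ + 2 ^ ((1:ℝ)/3) * A * m₃),
      2 * B * m₂ * e₂ / (2 * B * m₁ + 2 * 2 ^ ((1:ℝ)/3) * A * m₃)), ?_, ?_⟩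
    · have p1 : (0:ℝ) < 2 * 2 ^ ((1:ℝ)/3) * A * m₂ * e₂ / (2 * B * m₁ + 2 ^ ((1:ℝ)/3) * A * m₃) := by positivity
      have p3 : (0:ℝ) < 2 * B * m₂ * e₂ / (2 * B * m₁ + 2 * 2 ^ ((1:ℝ)/3) * A * m₃) := by positivity
      exact ⟨p1, p3, (key1 _ _ _ p1 h2 p3).mpr rfl, (key2 _ _ _ p1 h2 p3).mpr rfl⟩
    · rintro ⟨x, y⟩ ⟨hx, hy, hn1, hn2⟩
      have := (key1 x e₂ y hx h2 hy).mp hn1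
      have := (key2 x e₂ y hx h2 hy).mp hn2
      simp_all
end

section
/- Let Ā, B̄, m₀, m₁, m₂, m₃ be positive real numbers, and for angles (δ₁, δ₂, η₁, η₂) define ν₁ := −(2·2^{1/3} Ā cos(δ₁ + 2η₁) e₂ m₂ + 2B̄ cos(δ₁ + η₁) e₁ m₁ − 2^{1/3} Ā cos(δ₂ + 2η₂) e₁ m₃)/(√m₀ · e₁ e₂) and ν₂ := (2B̄ cos(δ₁ + η₁) e₃ m₁ − 2·2^{1/3} Ā cos(δ₂ + 2η₂) e₃ m₃ − 2B̄ cos(δ₂ + η₂) e₂ m₂)/(√m₀ · e₂ e₃). Then at the configuration (δ₁, δ₂, η₁, η₂) = (0, 0, 0, 0) there exist no positive real numbers e₁, e₂, e₃ with ν₁ = 0 and ν₂ = 0. -/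
open Real

set_option linter.unusedVariables false

/-- At the all-zero configuration `(δ₁, δ₂, η₁, η₂) = (0, 0, 0, 0)` there are
no positive eccentricities `e₁, e₂, e₃` making both relative frequencies
`ν₁` and `ν₂` vanish. -/
theorem no_positive_eccentricities_at_zero_configuration
    (A B m₀ m₁ m₂ m₃ : ℝ)
    (hA : 0 < A) (hB : 0 < B) (hm₀ : 0 < m₀)
    (hm₁ : 0 < m₁) (hm₂ : 0 < m₂) (hm₃ : 0 < m₃) :
    ¬ ∃ e₁ e₂ e₃ : ℝ, 0 < e₁ ∧ 0 < e₂ ∧ 0 < e₃ ∧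
      nu1 A B m₀ m₁ m₂ m₃ e₁ e₂ e₃ 0 0 0 0 = 0 ∧
      nu2 A B m₀ m₁ m₂ m₃ e₁ e₂ e₃ 0 0 0 0 = 0 := by
  rintro ⟨e₁, e₂, e₃, he₁, he₂, he₃, h1, h2⟩
  have hs : 0 < Real.sqrt m₀ := Real.sqrt_pos.mpr hm₀
  have hc : (0:ℝ) < 2 ^ ((1 : ℝ) / 3) := Real.rpow_pos_of_pos two_pos _
  set c := (2:ℝ) ^ ((1 : ℝ) / 3) with hcdef
  have hd1 : Real.sqrt m₀ * (e₁ * e₂) ≠ 0 := by positivity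
  have hd2 : Real.sqrt m₀ * (e₂ * e₃) ≠ 0 := by positivity
  rw [nu1] at h1
  rw [nu2] at h2
  simp only [add_zero, mul_zero, Real.cos_zero, mul_one] at h1 h2
  rw [div_eq_zero_iff] at h1 h2
  rcases h1 with h1 | h1; swap; · exact hd1 h1
  rcases h2 with h2 | h2; swap; · exact hd2 h2
  have h1' : 2 * c * A * e₂ * m₂ + 2 * B * e₁ * m₁ - c * A * e₁ * m₃ = 0 := by
    nlinarith [h1]
  nlinarith [mul_pos (mul_pos (mul_pos hc hA) he₂) hm₂,
    mul_pos (mul_pos (mul_pos hc hA) he₃) hm₃,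
    mul_pos (mul_pos hB he₁) hm₁, mul_pos (mul_pos hB he₂) hm₂,
    mul_pos he₁ he₃, mul_pos (mul_pos hB he₃) hm₁]
end

section
/- Let p ≥ 1 and q ≥ 0 be integers, τ > p − 1, and for γ > 0 let HD_{γ,τ} denote the set of (ϖ, β) ∈ ℝ^p × ℝ^q such that |k·ϖ + l·β| ≥ γ (|k|^τ + 1)^{−1} for all k ∈ ℤ^p \ {0} and all l ∈ ℤ^q with |l₁| + ⋯ + |l_q| ≤ 2, where |k| is the Euclidean norm. Let B₁ and B_{1/2} denote the closed balls of radii 1 and 1/2 centered at the origin of ℝ^{p+q}, and let φ : B₁ → ℝ^{p+q} be a C¹ map that is a diffeomorphism onto its image. Then there exists γ₀ > 0 such that for every γ ∈ (0, γ₀) the set {ι ∈ B_{1/2} : φ(ι) ∈ HD_{γ,τ}} has positive Lebesgue measure. -/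
/-!
Outside a set of measure `O(γ)`, every point of a box satisfies the conditions `HD_{γ,τ}`: the
complement of `HD_{γ,τ}` is covered by the slabs `|k·ϖ + l·β| < γ (|k|^τ + 1)⁻¹`, such a slab
meets the box in measure `≲ γ ‖k‖_∞^{-(τ+1)}`, and `∑ₖ ‖k‖_∞^{-(τ+1)}` converges because
`τ + 1 > p`. By the inverse function theorem `φ(B_{1/2})` is a neighbourhood of `φ(0)`, so for
small `γ` it meets `HD_{γ,τ}` in positive measure; as a `C¹` map sends null sets to null sets,
the parameters mapped into `HD_{γ,τ}` cannot form a null set.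
-/

open MeasureTheory Metric

/-- The Euclidean norm of an integer vector. -/
noncomputable def intNorm {p : ℕ} (k : Fin p → ℤ) : ℝ :=
  Real.sqrt (∑ i, ((k i : ℝ)) ^ 2)

/-- The set of frequency vectors `(ϖ, β) ∈ ℝ^p × ℝ^q` satisfying the
homogeneous Diophantine conditions
`|k·ϖ + l·β| ≥ γ (|k|^τ + 1)⁻¹` for all `k ∈ ℤ^p \ {0}` and all `l ∈ ℤ^q`
with `|l₁| + ⋯ + |l_q| ≤ 2`. -/
def HD (p q : ℕ) (γ τ : ℝ) : Set ((Fin p → ℝ) × (Fin q → ℝ)) :=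
  {x | ∀ k : Fin p → ℤ, k ≠ 0 → ∀ l : Fin q → ℤ, (∑ j, |l j|) ≤ 2 →
    γ * (intNorm k ^ τ + 1)⁻¹ ≤ |(∑ i, (k i : ℝ) * x.1 i) + ∑ j, (l j : ℝ) * x.2 j|}

open scoped ENNReal Topology

lemma MeasureTheory.Measure.prod_apply_le_mul_of_sections {α β : Type*}
    [MeasurableSpace α] [MeasurableSpace β] {μ : Measure α} {ν : Measure β} [SFinite μ]
    [SFinite ν] {S : Set (α × β)} (hS : MeasurableSet S) {B : Set β} (hB : MeasurableSet B) (hSB : ∀ z ∈ S, z.2 ∈ B)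
    {m : ℝ≥0∞} (hsec : ∀ y ∈ B, μ ((·, y) ⁻¹' S) ≤ m) :
    μ.prod ν S ≤ m * ν B := by
  rw [Measure.prod_apply_symm hS, ← lintegral_indicator_const hB]
  refine lintegral_mono fun y => ?_
  by_cases hy : y ∈ B
  · simpa [hy] using hsec y hy
  · have : (·, y) ⁻¹' S = ∅ := Set.eq_empty_of_forall_notMem fun x hx => hy (hSB _ hx)
    simp [this]

lemma volume_slab_inter_closedBall_le {n : ℕ} {a : Fin (n + 1) → ℝ} (ha : a ≠ 0)
    (c δ : ℝ) {R : ℝ} (hR : 0 ≤ R) :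
    volume {x : Fin (n + 1) → ℝ | |∑ i, a i * x i + c| ≤ δ ∧ x ∈ closedBall 0 R}
      ≤ ENNReal.ofReal (2 * δ / ‖a‖) * ENNReal.ofReal ((2 * R) ^ n) := by
  obtain ⟨i₀, hi₀ : ‖a i₀‖ = ‖a‖⟩ := (IsGreatest.pi_norm a).1
  set S := {x : Fin (n + 1) → ℝ | |∑ i, a i * x i + c| ≤ δ ∧ x ∈ closedBall 0 R}
  have hS : MeasurableSet S :=
    ((isClosed_le (f := fun x : Fin (n + 1) → ℝ => |∑ i, a i * x i + c|) (by fun_prop)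
      continuous_const).inter isClosed_closedBall).measurableSet
  let e := MeasurableEquiv.piFinSuccAbove (fun _ : Fin (n + 1) => ℝ) i₀
  have he (t : ℝ) (y : Fin n → ℝ) : e.symm (t, y) = Fin.insertNth i₀ t y := rfl
  -- Fubini with `x i₀` integrated first: each fibre is an interval of length `2 δ / |a i₀|`.
  calc volume S = volume (e.symm ⁻¹' S) :=
        ((volume_preserving_piFinSuccAbove _ i₀).symm _).measure_preimage_equiv S |>.symm
    _ = (volume.prod volume) (e.symm ⁻¹' S) := by rfl
    _ ≤ ENNReal.ofReal (2 * δ / ‖a‖) * volume (closedBall (0 : Fin n → ℝ) R) := by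
        refine Measure.prod_apply_le_mul_of_sections (e.symm.measurable hS) measurableSet_closedBall
          ?_ fun y _ => ?_
        · rintro ⟨t, y⟩ ⟨-, hx⟩
          simp only [he, mem_closedBall_zero_iff] at hx ⊢
          refine (pi_norm_le_iff_of_nonneg hR).2 fun j => ?_
          simpa using (norm_le_pi_norm _ (i₀.succAbove j)).trans hx
        · set c' := ∑ j, a (i₀.succAbove j) * y j + c
          calc volume ((·, y) ⁻¹' (e.symm ⁻¹' S))
              ≤ volume (closedBall (-c' / a i₀) (δ / ‖a‖)) := by
                refine measure_mono fun t ht => ?_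
                have hai₀ : a i₀ ≠ 0 := norm_ne_zero_iff.1 (hi₀ ▸ norm_ne_zero_iff.2 ha)
                have hsum :
                    ∑ i, a i * Fin.insertNth (α := fun _ => ℝ) i₀ t y i + c = a i₀ * t + c' := by
                  simp [c', Fin.sum_univ_succAbove _ i₀, add_assoc]
                replace ht : |a i₀ * t + c'| ≤ δ := hsum ▸ ht.1
                rw [mem_closedBall, Real.dist_eq, ← hi₀, Real.norm_eq_abs,
                  show t - -c' / a i₀ = (a i₀ * t + c') / a i₀ by field_simp; ring, abs_div]
                gcongr
            _ = ENNReal.ofReal (2 * δ / ‖a‖) := by rw [Real.volume_closedBall, mul_div_assoc]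
    _ = ENNReal.ofReal (2 * δ / ‖a‖) * ENNReal.ofReal ((2 * R) ^ n) := by
        rw [Real.volume_pi_closedBall _ hR, Fintype.card_fin]

lemma volume_slab_prod_inter_closedBall_le {n q : ℕ} {a : Fin (n + 1) → ℝ} (ha : a ≠ 0)
    (b : Fin q → ℝ) (δ : ℝ) {R : ℝ} (hR : 0 ≤ R) :
    volume {x : (Fin (n + 1) → ℝ) × (Fin q → ℝ) |
        |∑ i, a i * x.1 i + ∑ j, b j * x.2 j| ≤ δ ∧ x ∈ closedBall 0 R}
      ≤ ENNReal.ofReal (2 * δ / ‖a‖) * ENNReal.ofReal ((2 * R) ^ (n + q)) := by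
  have hS : MeasurableSet {x : (Fin (n + 1) → ℝ) × (Fin q → ℝ) |
      |∑ i, a i * x.1 i + ∑ j, b j * x.2 j| ≤ δ ∧ x ∈ closedBall 0 R} :=
    ((isClosed_le (f := fun x : (Fin (n + 1) → ℝ) × (Fin q → ℝ) =>
      |∑ i, a i * x.1 i + ∑ j, b j * x.2 j|) (by fun_prop)
      continuous_const).inter isClosed_closedBall).measurableSet
  rw [Measure.volume_eq_prod]
  calc _ ≤ ENNReal.ofReal (2 * δ / ‖a‖) * ENNReal.ofReal ((2 * R) ^ n)
        * volume (closedBall (0 : Fin q → ℝ) R) := by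
        refine Measure.prod_apply_le_mul_of_sections hS measurableSet_closedBall
          (fun x hx => ?_) fun y _ => ?_
        · exact mem_closedBall_zero_iff.2 ((norm_snd_le x).trans (mem_closedBall_zero_iff.1 hx.2))
        · refine (measure_mono fun x hx => ?_).trans
            (volume_slab_inter_closedBall_le ha (∑ j, b j * y j) δ hR)
          exact ⟨hx.1, mem_closedBall_zero_iff.2
            ((norm_fst_le (x, y)).trans (mem_closedBall_zero_iff.1 hx.2))⟩
    _ = ENNReal.ofReal (2 * δ / ‖a‖) * ENNReal.ofReal ((2 * R) ^ (n + q)) := by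
        rw [Real.volume_pi_closedBall _ hR, Fintype.card_fin, mul_assoc,
          ← ENNReal.ofReal_mul (by positivity), pow_add]

lemma norm_intCast_le_intNorm {n : ℕ} (k : Fin n → ℤ) : ‖fun i => (k i : ℝ)‖ ≤ intNorm k := by
  refine (pi_norm_le_iff_of_nonneg (Real.sqrt_nonneg _)).2 fun i => ?_
  rw [Real.norm_eq_abs, ← Real.sqrt_sq_eq_abs]
  exact Real.sqrt_le_sqrt
    (Finset.single_le_sum (fun j _ => sq_nonneg ((k j : ℝ))) (Finset.mem_univ i))

lemma one_le_norm_intCast {n : ℕ} {k : Fin n → ℤ} (hk : k ≠ 0) : 1 ≤ ‖fun i => (k i : ℝ)‖ := by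
  obtain ⟨i, hi⟩ := Function.ne_iff.1 hk
  calc (1 : ℝ) ≤ |(k i : ℝ)| := by exact_mod_cast Int.one_le_abs hi
    _ ≤ _ := norm_le_pi_norm (fun i => (k i : ℝ)) i

lemma inv_intNorm_rpow_add_one_div_le {n : ℕ} {τ : ℝ} (hτ : 0 ≤ τ) {k : Fin n → ℤ}
    (hk : k ≠ 0) :
    (intNorm k ^ τ + 1)⁻¹ / ‖fun i => (k i : ℝ)‖ ≤ ‖fun i => (k i : ℝ)‖ ^ (-(τ + 1)) := by
  set N := ‖fun i => (k i : ℝ)‖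
  have hN : 0 < N := one_pos.trans_le (one_le_norm_intCast hk)
  calc (intNorm k ^ τ + 1)⁻¹ / N ≤ (N ^ τ)⁻¹ / N := by
        gcongr
        exact (Real.rpow_le_rpow hN.le (norm_intCast_le_intNorm k) hτ).trans
          (le_add_of_nonneg_right zero_le_one)
    _ = N ^ (-(τ + 1)) := by
        rw [Real.rpow_neg hN.le, Real.rpow_add_one hN.ne', mul_inv, div_eq_mul_inv]

lemma summable_norm_intCast_rpow {n : ℕ} {r : ℝ} (hr : n < r) :
    Summable fun k : Fin n → ℤ => ‖fun i => (k i : ℝ)‖ ^ (-r) := by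
  let L := Submodule.span ℤ (Set.range (Pi.basisFun ℝ (Fin n)))
  have hL : Summable fun z : L => ‖z‖ ^ (-r) := by
    refine ZLattice.summable_norm_rpow L (-r) ?_
    rw [ZLattice.rank ℝ, Module.finrank_fin_fun]
    linarith
  have hmem (k : Fin n → ℤ) : (fun i => (k i : ℝ)) ∈ L :=
    ((Pi.basisFun ℝ (Fin n)).mem_span_iff_repr_mem ℤ _).2 fun i => by simp
  have hcast_inj : Function.Injective fun k : Fin n → ℤ => (⟨_, hmem k⟩ : L) := fun k k' h => by
    funext i
    simpa using congrFun (congrArg Subtype.val h) i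
  exact (hL.comp_injective hcast_inj).congr fun k => rfl

lemma exists_volume_closedBall_sdiff_HD_le {n q : ℕ} {τ : ℝ} (hτ : n < τ) {R : ℝ}
    (hR : 0 ≤ R) :
    ∃ C : ℝ≥0∞, C ≠ ∞ ∧ ∀ γ, 0 ≤ γ →
      volume (closedBall 0 R \ HD (n + 1) q γ τ) ≤ ENNReal.ofReal γ * C := by
  let N (k : Fin (n + 1) → ℤ) : ℝ := ‖fun i => (k i : ℝ)‖
  let w (k : Fin (n + 1) → ℤ) : ℝ := 2 * N k ^ (-(τ + 1)) * (2 * R) ^ (n + q)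
  have hw : Summable w :=
    ((summable_norm_intCast_rpow (by push_cast; linarith)).mul_left 2).mul_right _
  let L := Fintype.piFinset fun _ : Fin q => Finset.Icc (-2 : ℤ) 2
  refine ⟨L.card * ∑' k, ENNReal.ofReal (w k), ?_, fun γ hγ => ?_⟩
  · rw [← ENNReal.ofReal_tsum_of_nonneg (fun k => by positivity) hw]
    finiteness
  let slab (k : Fin (n + 1) → ℤ) (l : Fin q → ℤ) : Set ((Fin (n + 1) → ℝ) × (Fin q → ℝ)) :=
    {x | |∑ i, (k i : ℝ) * x.1 i + ∑ j, (l j : ℝ) * x.2 j| ≤ γ * (intNorm k ^ τ + 1)⁻¹ ∧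
      x ∈ closedBall 0 R}
  have hcover : closedBall 0 R \ HD (n + 1) q γ τ ⊆ ⋃ k, ⋃ (_ : k ≠ 0), ⋃ l ∈ L, slab k l := by
    rintro x ⟨hx, hxHD⟩
    simp only [HD, Set.mem_ofPred_eq, not_forall, not_le] at hxHD
    obtain ⟨k, hk, l, hl, hlt⟩ := hxHD
    have hlL : l ∈ L := Fintype.mem_piFinset.2 fun j => Finset.mem_Icc.2 <| abs_le.1 <|
      (Finset.single_le_sum (fun j _ => abs_nonneg (l j)) (Finset.mem_univ j)).trans hl
    simp only [Set.mem_iUnion]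
    exact ⟨k, hk, l, hlL, hlt.le, hx⟩
  have hslab (k : Fin (n + 1) → ℤ) (hk : k ≠ 0) (l : Fin q → ℤ) :
      volume (slab k l) ≤ ENNReal.ofReal γ * ENNReal.ofReal (w k) := by
    have ha : (fun i => (k i : ℝ)) ≠ 0 :=
      norm_ne_zero_iff.1 (one_pos.trans_le (one_le_norm_intCast hk)).ne'
    refine (volume_slab_prod_inter_closedBall_le ha (fun j => (l j : ℝ)) _ hR).trans ?_
    have : 0 ≤ intNorm k := Real.sqrt_nonneg _
    rw [← ENNReal.ofReal_mul (by positivity), ← ENNReal.ofReal_mul hγ]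
    refine ENNReal.ofReal_le_ofReal ?_
    have hwidth := inv_intNorm_rpow_add_one_div_le (hτ.le.trans' (Nat.cast_nonneg n)) hk
    calc 2 * (γ * (intNorm k ^ τ + 1)⁻¹) / N k * (2 * R) ^ (n + q)
        = 2 * γ * (2 * R) ^ (n + q) * ((intNorm k ^ τ + 1)⁻¹ / N k) := by ring
      _ ≤ 2 * γ * (2 * R) ^ (n + q) * N k ^ (-(τ + 1)) := by gcongr
      _ = γ * w k := by ring
  calc volume (closedBall 0 R \ HD (n + 1) q γ τ)
      ≤ ∑' k, volume (⋃ (_ : k ≠ 0), ⋃ l ∈ L, slab k l) :=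
        (measure_mono hcover).trans (measure_iUnion_le _)
    _ ≤ ∑' k, ∑ l ∈ L, ENNReal.ofReal γ * ENNReal.ofReal (w k) := by
        refine ENNReal.tsum_le_tsum fun k => ?_
        by_cases hk : k = 0
        · simp [hk]
        · simp only [ne_eq, hk, not_false_eq_true, Set.iUnion_true]
          exact (measure_biUnion_finset_le _ _).trans (Finset.sum_le_sum fun l _ => hslab k hk l)
    _ = ENNReal.ofReal γ * (L.card * ∑' k, ENNReal.ofReal (w k)) := by
        simp only [Finset.sum_const, nsmul_eq_mul, ENNReal.tsum_mul_left]
        ring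

lemma exists_pos_volume_inter_HD {n q : ℕ} {τ : ℝ} (hτ : n < τ)
    {s : Set ((Fin (n + 1) → ℝ) × (Fin q → ℝ))} (hs : Bornology.IsBounded s)
    (hs_pos : 0 < volume s) :
    ∃ γ₀ : ℝ, 0 < γ₀ ∧ ∀ γ ∈ Set.Ioo (0 : ℝ) γ₀, 0 < volume (s ∩ HD (n + 1) q γ τ) := by
  obtain ⟨R, hR, hsR⟩ := hs.subset_closedBall_lt 0 0
  obtain ⟨C, hC, hbad⟩ := exists_volume_closedBall_sdiff_HD_le (q := q) hτ hR.le
  have hlim : Filter.Tendsto (fun γ => ENNReal.ofReal γ * C) (𝓝 0) (𝓝 0) := by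
    simpa using ENNReal.Tendsto.mul_const
      (ENNReal.tendsto_ofReal (Filter.tendsto_id (x := 𝓝 (0 : ℝ)))) (Or.inr hC)
  obtain ⟨γ₀, hγ₀, hsmall⟩ := Metric.eventually_nhds_iff.1 (hlim.eventually (gt_mem_nhds hs_pos))
  refine ⟨γ₀, hγ₀, fun γ ⟨hγ, hγγ₀⟩ => pos_iff_ne_zero.2 fun h0 => ?_⟩
  have hsdiff : volume (s \ HD (n + 1) q γ τ) < volume s :=
    calc volume (s \ HD (n + 1) q γ τ) ≤ volume (closedBall 0 R \ HD (n + 1) q γ τ) :=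
          measure_mono (Set.sdiff_subset_sdiff_left hsR)
      _ ≤ ENNReal.ofReal γ * C := hbad γ hγ.le
      _ < volume s := hsmall (by rwa [Real.dist_0_eq_abs, abs_of_pos hγ])
  exact hsdiff.not_ge <|
    (measure_le_inter_add_sdiff volume s (HD (n + 1) q γ τ)).trans (by rw [h0, zero_add])

lemma MeasureTheory.addHaar_image_eq_zero_of_differentiableOn_of_finrank_eq
    {E F : Type*} [NormedAddCommGroup E] [NormedSpace ℝ E] [FiniteDimensional ℝ E]
    [MeasurableSpace E] [BorelSpace E] [NormedAddCommGroup F] [NormedSpace ℝ F]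
    [FiniteDimensional ℝ F] [MeasurableSpace F] [BorelSpace F]
    (μ : Measure E) [μ.IsAddHaarMeasure] (ν : Measure F) [ν.IsAddHaarMeasure]
    (hEF : Module.finrank ℝ E = Module.finrank ℝ F) {f : E → F} {s : Set E}
    (hf : DifferentiableOn ℝ f s) (hs : μ s = 0) : ν (f '' s) = 0 := by
  let e : F ≃L[ℝ] E := ContinuousLinearEquiv.ofFinrankEq hEF.symm
  have hes : μ ((e ∘ f) '' s) = 0 :=
    addHaar_image_eq_zero_of_differentiableOn_of_addHaar_eq_zero μ
      (e.differentiable.comp_differentiableOn hf) hs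
  have hac : ν ≪ μ.map e.symm := Measure.absolutelyContinuous_isAddHaarMeasure _ _
  apply hac
  rw [show μ.map e.symm = μ.map e.symm.toHomeomorph.toMeasurableEquiv from rfl,
    MeasurableEquiv.map_apply]
  rwa [Set.image_comp, ContinuousLinearEquiv.image_eq_preimage_symm] at hes

lemma ContDiffOn.image_mem_nhds {E F : Type*} [NormedAddCommGroup E] [NormedSpace ℝ E]
    [CompleteSpace E] [NormedAddCommGroup F] [NormedSpace ℝ F] [CompleteSpace F]
    {f : E → F} {s t : Set E} {x : E} (hf : ContDiffOn ℝ 1 f s) (hs : s ∈ 𝓝 x)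
    (hf' : Function.Bijective (fderivWithin ℝ f s x)) (ht : t ∈ 𝓝 x) :
    f '' t ∈ 𝓝 (f x) := by
  rw [fderivWithin_of_mem_nhds hs] at hf'
  let f'' : E ≃L[ℝ] F := ContinuousLinearEquiv.ofBijective (fderiv ℝ f x)
    (LinearMap.ker_eq_bot.mpr hf'.1) (LinearMap.range_eq_top.mpr hf'.2)
  have hstrict : HasStrictFDerivAt f (f'' : E →L[ℝ] F) x :=
    (hf.contDiffAt hs).hasStrictFDerivAt one_ne_zero
  rw [← hstrict.map_nhds_eq_of_equiv]
  exact Filter.image_mem_map ht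

theorem hd_pullback_positive_measure_general (p q : ℕ) (hp : 1 ≤ p) (τ : ℝ)
    (hτ : (p : ℝ) - 1 < τ)
    (φ : EuclideanSpace ℝ (Fin (p + q)) → (Fin p → ℝ) × (Fin q → ℝ))
    (hφ : ContDiffOn ℝ 1 φ (closedBall 0 1))
    (hder : ∀ x ∈ closedBall (0 : EuclideanSpace ℝ (Fin (p + q))) 1,
      Function.Bijective (fderivWithin ℝ φ (closedBall 0 1) x)) :
    ∃ γ₀ : ℝ, 0 < γ₀ ∧ ∀ γ ∈ Set.Ioo (0 : ℝ) γ₀,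
      0 < volume {ι ∈ closedBall (0 : EuclideanSpace ℝ (Fin (p + q))) (1 / 2) |
        φ ι ∈ HD p q γ τ} := by
  obtain ⟨n, rfl⟩ : ∃ n, p = n + 1 := ⟨p - 1, by omega⟩
  set K := closedBall (0 : EuclideanSpace ℝ (Fin (n + 1 + q))) (1 / 2)
  have hK : K ⊆ closedBall 0 1 := closedBall_subset_closedBall (by norm_num)
  have hφK_nhds : φ '' K ∈ 𝓝 (φ 0) :=
    hφ.image_mem_nhds (closedBall_mem_nhds 0 one_pos) (hder 0 (mem_closedBall_self zero_le_one))
      (closedBall_mem_nhds 0 (by norm_num))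
  have hφK_bdd : Bornology.IsBounded (φ '' K) :=
    ((isCompact_closedBall 0 _).image_of_continuousOn (hφ.continuousOn.mono hK)).isBounded
  obtain ⟨γ₀, hγ₀, hpos⟩ := exists_pos_volume_inter_HD (by push_cast at hτ; linarith) hφK_bdd
    (Measure.measure_pos_of_mem_nhds volume hφK_nhds)
  refine ⟨γ₀, hγ₀, fun γ hγ => pos_iff_ne_zero.2 fun h0 => (hpos γ hγ).ne' ?_⟩
  have : (volume : Measure ((Fin (n + 1) → ℝ) × (Fin q → ℝ))).IsAddHaarMeasure :=
    Measure.prod.instIsAddHaarMeasure _ _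
  rw [← Set.image_inter_preimage]
  exact addHaar_image_eq_zero_of_differentiableOn_of_finrank_eq volume volume (by simp)
    ((hφ.differentiableOn one_ne_zero).mono (Set.inter_subset_left.trans hK)) h0

/-- Iso-chronic KAM measure estimate: if the frequency map `φ` is a `C¹`
diffeomorphism of the closed unit ball of `ℝ^{p+q}` onto its image, then for
all sufficiently small `γ > 0` the set of parameters `ι` in the ball of radius
`1/2` whose frequencies `φ(ι)` satisfy the Diophantine conditions `HD_{γ,τ}`
has positive Lebesgue measure. -/
theorem hd_pullback_positive_measure (p q : ℕ) (hp : 1 ≤ p) (τ : ℝ)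
    (hτ : (p : ℝ) - 1 < τ)
    (φ : EuclideanSpace ℝ (Fin (p + q)) → (Fin p → ℝ) × (Fin q → ℝ))
    (hφ : ContDiffOn ℝ 1 φ (closedBall 0 1))
    (hinj : Set.InjOn φ (closedBall 0 1))
    (hder : ∀ x ∈ closedBall (0 : EuclideanSpace ℝ (Fin (p + q))) 1,
      Function.Bijective (fderivWithin ℝ φ (closedBall 0 1) x)) :
    ∃ γ₀ : ℝ, 0 < γ₀ ∧ ∀ γ ∈ Set.Ioo (0 : ℝ) γ₀,
      0 < volume {ι ∈ closedBall (0 : EuclideanSpace ℝ (Fin (p + q))) (1 / 2) |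
        φ ι ∈ HD p q γ τ} :=
  hd_pullback_positive_measure_general p q hp τ hτ φ hφ hder
end
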